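/- For every n and every matrix B ∈ Matrix (Fin n) (Fin n) ℝ, the 2n × 2n block matrix [[−Bᵀ ⬝ B, Bᵀ], [B, −I]] (with I the n × n identity) is not invertible; equivalently, its determinant is 0. -/

import Mathlib

open Matrix

/-! The Schur complement of the block `-1` is `-(CB) - C(-1)⁻¹B = 0`, so the determinant
factors through `det 0 = 0`. -/

theorem Matrix.det_fromBlocks_neg_mul_neg_one {m n R : Type*} [Fintype m] [Fintype n]
    [DecidableEq m] [DecidableEq n] [Nonempty n] [CommRing R]
    (B : Matrix m n R) (C : Matrix n m R) :
    (fromBlocks (-(C * B)) C B (-1 : Matrix m m R)).det = 0 := by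
  let : Invertible (1 : Matrix m m R) := invertibleOne
  let : Invertible (-1 : Matrix m m R) := invertibleNeg 1
  have hschur : -(C * B) - C * ⅟(-1 : Matrix m m R) * B = 0 := by
    rw [invOf_neg, invOf_one, Matrix.mul_neg, Matrix.mul_one, Matrix.neg_mul,
      sub_neg_eq_add, neg_add_cancel]
  rw [det_fromBlocks₂₂, hschur, det_zero, mul_zero]

theorem hessian_nuisance_block_singular
    (n : ℕ) (hn : 0 < n) (B : Matrix (Fin n) (Fin n) ℝ) :
    ¬ IsUnit (Matrix.fromBlocks (-(Bᵀ * B)) Bᵀ B (-1 : Matrix (Fin n) (Fin n) ℝ)) ∧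
    (Matrix.fromBlocks (-(Bᵀ * B)) Bᵀ B (-1 : Matrix (Fin n) (Fin n) ℝ)).det = 0 := by
  have : Nonempty (Fin n) := ⟨⟨0, hn⟩⟩
  have hdet := det_fromBlocks_neg_mul_neg_one B Bᵀ
  refine ⟨?_, hdet⟩
  rw [isUnit_iff_isUnit_det, hdet]
  exact not_isUnit_zero
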